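/- Let R be a ring, σ an automorphism of R, δ a σ-derivation, S = R[x; σ, δ], and M a right R-module. Then M is nonsingular as an R-module if and only if the induced module M ⊗_R S is nonsingular as a right R-module. -/
import Mathlib


open MulOpposite

/-- `δ` is a `σ`-derivation of the ring `R`. -/
def IsSigmaDeriv {R : Type} [Ring R] (σ : R ≃+* R) (δ : R → R) : Prop :=
  (∀ a b, δ (a + b) = δ a + δ b) ∧ ∀ a b, δ (a * b) = σ a * δ b + δ a * b

/-- A presentation of the skew polynomial ring `S = R[x; σ, δ]`: `S` is a ring containing an
image of `R` via `ι`, with an element `x` satisfying `x·r = σ(r)·x + δ(r)`, and `S` is free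
as a left `R`-module with basis the powers of `x`. -/
structure SkewPoly (R S : Type) [Ring R] [Ring S] (σ : R ≃+* R) (δ : R → R) : Type where
  ι : R →+* S
  x : S
  comm : ∀ r : R, x * ι r = ι (σ r) * x + ι (δ r)
  basis : Function.Bijective fun c : ℕ →₀ R => c.sum fun i a => ι a * x ^ i

/-- A presentation of the induced right `S`-module `M ⊗_R S` of a right `R`-module `M`
(right modules are encoded as modules over the opposite ring): `N` is a right `S`-module
containing `M` via `j`, compatibly with the right `R`-actions, and every element of `N` is
uniquely a polynomial `∑ (j mᵢ)·xⁱ` with coefficients in `M`. -/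
structure Induced (R S M N : Type) [Ring R] [Ring S] [AddCommGroup M] [Module Rᵐᵒᵖ M]
    [AddCommGroup N] [Module Sᵐᵒᵖ N] {σ : R ≃+* R} {δ : R → R}
    (sp : SkewPoly R S σ δ) : Type where
  j : M →+ N
  j_smul : ∀ (r : R) (m : M), j (op r • m) = op (sp.ι r) • j m
  free : Function.Bijective fun c : ℕ →₀ M => c.sum fun i m => op (sp.x ^ i) • j m

variable {R S M N : Type} [Ring R] [Ring S] [AddCommGroup M] [Module Rᵐᵒᵖ M]
  [AddCommGroup N] [Module Sᵐᵒᵖ N] {σ : R ≃+* R} {δ : R → R}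

/-- The polynomial `∑ (j mᵢ)·xⁱ` in `M ⊗_R S` with coefficient family `c`. -/
def pol (sp : SkewPoly R S σ δ) (im : Induced R S M N sp) (c : ℕ →₀ M) : N :=
  c.sum fun i m => op (sp.x ^ i) • im.j m

/-- `ν ∈ M ⊗_R S` has degree exactly `k`. -/
def DegEq (sp : SkewPoly R S σ δ) (im : Induced R S M N sp) (ν : N) (k : ℕ) : Prop :=
  ∃ c : ℕ →₀ M, pol sp im c = ν ∧ c k ≠ 0 ∧ ∀ i, k < i → c i = 0

/-- `ν` is a good polynomial of degree `k`: whenever `ν·r ≠ 0` for `r ∈ R`,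
`deg (ν·r) = deg ν = k`. -/
def GoodAt (sp : SkewPoly R S σ δ) (im : Induced R S M N sp) (ν : N) (k : ℕ) : Prop :=
  DegEq sp im ν k ∧ ∀ r : R, op (sp.ι r) • ν ≠ 0 → DegEq sp im (op (sp.ι r) • ν) k

/-- `ν` is a good polynomial. -/
def Good (sp : SkewPoly R S σ δ) (im : Induced R S M N sp) (ν : N) : Prop :=
  ∃ k, GoodAt sp im ν k

/-- A subset `J` of a ring `T` (to be applied to right annihilators, which are right ideals)
is essential as a right ideal: every nonzero `t ∈ T` has a nonzero right multiple in `J`. -/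
def EssAnn {T : Type} [Ring T] (J : Set T) : Prop :=
  ∀ t : T, t ≠ 0 → ∃ s : T, t * s ≠ 0 ∧ t * s ∈ J

/-! ### Auxiliary lemmas -/

lemma pol_zero' (sp : SkewPoly R S σ δ) (im : Induced R S M N sp) :
    pol sp im 0 = 0 := Finsupp.sum_zero_index

lemma pol_add' (sp : SkewPoly R S σ δ) (im : Induced R S M N sp) (c c' : ℕ →₀ M) :
    pol sp im (c + c') = pol sp im c + pol sp im c' := by
  unfold pol
  apply Finsupp.sum_add_index' <;> intros <;> simp

/-- `pol` as an additive monoid hom. -/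
def polHom (sp : SkewPoly R S σ δ) (im : Induced R S M N sp) : (ℕ →₀ M) →+ N where
  toFun := pol sp im
  map_zero' := pol_zero' sp im
  map_add' := pol_add' sp im

lemma pol_single' (sp : SkewPoly R S σ δ) (im : Induced R S M N sp) (i : ℕ) (m : M) :
    pol sp im (Finsupp.single i m) = op (sp.x ^ i) • im.j m := by
  unfold pol
  rw [Finsupp.sum_single_index]
  simp

lemma pol_inj (sp : SkewPoly R S σ δ) (im : Induced R S M N sp) :
    Function.Injective (pol sp im) := im.free.injective

lemma iter_mul (σ : R ≃+* R) (k : ℕ) (a b : R) :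
    (⇑σ)^[k] (a * b) = (⇑σ)^[k] a * (⇑σ)^[k] b := by
  induction k with
  | zero => rfl
  | succ n ih => simp [Function.iterate_succ_apply', ih]

lemma iter_zero (σ : R ≃+* R) (k : ℕ) : (⇑σ)^[k] (0 : R) = 0 :=
  Function.iterate_fixed (map_zero σ) k

lemma iter_inv (σ : R ≃+* R) (k : ℕ) (t : R) : (⇑σ)^[k] ((⇑σ.symm)^[k] t) = t :=
  (Function.LeftInverse.iterate σ.apply_symm_apply k) t

lemma iter_ne_zero (σ : R ≃+* R) (k : ℕ) {t : R} (ht : t ≠ 0) : (⇑σ)^[k] t ≠ 0 := by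
  intro h
  exact ht (Function.Injective.iterate σ.injective k (h.trans (iter_zero σ k).symm))

lemma pol_mul_x (sp : SkewPoly R S σ δ) (im : Induced R S M N sp) (c : ℕ →₀ M) :
    op sp.x • pol sp im c = pol sp im (Finsupp.mapDomain (· + 1) c) := by
  unfold pol
  rw [Finsupp.sum_mapDomain_index_inj (add_left_injective 1), Finsupp.smul_sum]
  refine Finsupp.sum_congr fun n _ => ?_
  rw [← mul_smul, ← op_mul, pow_succ]

/-- Key computation for a single term: `(j m · xⁱ) · r` is a polynomial of degree ≤ i with
top coefficient `m · σⁱ(r)`. -/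
lemma termB (sp : SkewPoly R S σ δ) (im : Induced R S M N sp) (hδ : IsSigmaDeriv σ δ)
    (i : ℕ) : ∀ (r : R) (m : M),
    ∃ c' : ℕ →₀ M, op (sp.x ^ i * sp.ι r) • im.j m = pol sp im c' ∧
      c' i = op ((⇑σ)^[i] r) • m ∧ ∀ n, i < n → c' n = 0 := by
  induction i with
  | zero =>
    intro r m
    refine ⟨Finsupp.single 0 (op r • m), ?_, by simp, fun n hn => ?_⟩
    · rw [pol_single', pow_zero, one_mul, op_one, one_smul, im.j_smul]
    · exact Finsupp.single_eq_of_ne (by omega)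
  | succ i ih =>
    intro r m
    obtain ⟨c₁, h1, h1i, h1top⟩ := ih (σ r) m
    obtain ⟨c₂, h2, h2i, h2top⟩ := ih (δ r) m
    refine ⟨Finsupp.mapDomain (· + 1) c₁ + c₂, ?_, ?_, ?_⟩
    · have hx : sp.x ^ (i + 1) * sp.ι r
          = sp.x ^ i * sp.ι (σ r) * sp.x + sp.x ^ i * sp.ι (δ r) := by
        rw [pow_succ, mul_assoc, sp.comm, mul_add, ← mul_assoc]
      rw [hx, pol_add', op_add, add_smul, ← h2, op_mul, mul_smul, h1, pol_mul_x]
    · have e1 : (Finsupp.mapDomain (· + 1) c₁) (i + 1) = c₁ i :=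
        Finsupp.mapDomain_apply (add_left_injective 1) c₁ i
      rw [Finsupp.add_apply, e1, h2top (i + 1) (by omega), add_zero, h1i,
        Function.iterate_succ_apply]
    · intro n hn
      obtain ⟨nn, rfl⟩ : ∃ nn, n = nn + 1 := ⟨n - 1, by omega⟩
      have e1 : (Finsupp.mapDomain (· + 1) c₁) (nn + 1) = c₁ nn :=
        Finsupp.mapDomain_apply (add_left_injective 1) c₁ nn
      rw [Finsupp.add_apply, e1, h1top nn (by omega), h2top (nn + 1) (by omega), add_zero]

/-- Key computation: if `c` has degree ≤ k, then `(pol c) · r` is a polynomial of degree ≤ k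
with top coefficient `c k · σᵏ(r)`. -/
lemma lemA (sp : SkewPoly R S σ δ) (im : Induced R S M N sp) (hδ : IsSigmaDeriv σ δ)
    (c : ℕ →₀ M) (k : ℕ) (hk : ∀ n, k < n → c n = 0) (r : R) :
    ∃ c' : ℕ →₀ M, op (sp.ι r) • pol sp im c = pol sp im c' ∧
      c' k = op ((⇑σ)^[k] r) • c k ∧ ∀ n, k < n → c' n = 0 := by
  classical
  choose d hd hdk hdtop using fun (i : ℕ) (m : M) => termB sp im hδ i r m
  have hle : ∀ i ∈ c.support, i ≤ k := by
    intro i hi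
    by_contra h
    exact Finsupp.mem_support_iff.mp hi (hk i (by omega))
  refine ⟨∑ i ∈ c.support, d i (c i), ?_, ?_, ?_⟩
  · have : pol sp im (∑ i ∈ c.support, d i (c i))
        = ∑ i ∈ c.support, pol sp im (d i (c i)) := map_sum (polHom sp im) _ _
    rw [this]
    have : op (sp.ι r) • pol sp im c
        = ∑ i ∈ c.support, op (sp.x ^ i * sp.ι r) • im.j (c i) := by
      rw [show pol sp im c = ∑ i ∈ c.support, op (sp.x ^ i) • im.j (c i) from rfl,
        Finset.smul_sum]
      refine Finset.sum_congr rfl fun i _ => ?_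
      rw [← mul_smul, ← op_mul]
    rw [this]
    exact Finset.sum_congr rfl fun i _ => hd i (c i)
  · rw [Finsupp.finset_sum_apply]
    by_cases hks : k ∈ c.support
    · rw [Finset.sum_eq_single_of_mem k hks fun i hi hne =>
        hdtop i (c i) k (lt_of_le_of_ne (hle i hi) hne), hdk]
    · have hck : c k = 0 := Finsupp.notMem_support_iff.mp hks
      rw [hck, smul_zero]
      refine Finset.sum_eq_zero fun i hi => ?_
      exact hdtop i (c i) k (lt_of_le_of_ne (hle i hi) (fun h => hks (h ▸ hi)))
  · intro n hn
    rw [Finsupp.finset_sum_apply]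
    refine Finset.sum_eq_zero fun i hi => ?_
    exact hdtop i (c i) n (lt_of_le_of_lt (hle i hi) hn)

/-- `M` is nonsingular as a right `R`-module if and only if the induced module
`M ⊗_R S` is nonsingular as a right `R`-module. -/
theorem stmt9 (sp : SkewPoly R S σ δ) (im : Induced R S M N sp) (hδ : IsSigmaDeriv σ δ) :
    (∀ m : M, EssAnn {r : R | op r • m = 0} → m = 0) ↔
      (∀ ν : N, EssAnn {r : R | op (sp.ι r) • ν = 0} → ν = 0) := by
  classical
  constructor
  · -- M nonsingular ⇒ induced module nonsingular
    intro hM ν hann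
    by_contra hν
    obtain ⟨c, hcpol⟩ := im.free.surjective ν
    have hcpol : pol sp im c = ν := hcpol
    have hc0 : c ≠ 0 := fun h => hν (by rw [← hcpol, h, pol_zero'])
    have hsupp : c.support.Nonempty := Finsupp.support_nonempty_iff.mpr hc0
    set k := c.support.max' hsupp with hkdef
    have hck : c k ≠ 0 := Finsupp.mem_support_iff.mp (c.support.max'_mem hsupp)
    have htop : ∀ n, k < n → c n = 0 := by
      intro n hn
      by_contra h
      exact absurd (Finset.le_max' _ n (Finsupp.mem_support_iff.mpr h)) (not_le.mpr hn)
    have hess : EssAnn {r : R | op r • c k = 0} := by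
      intro t ht
      obtain ⟨s, hts, hmem⟩ := hann ((⇑σ.symm)^[k] t)
        (fun h0 => ht (by rw [← iter_inv σ k t, h0, iter_zero]))
      refine ⟨(⇑σ)^[k] s, ?_, ?_⟩
      · have e : t * (⇑σ)^[k] s = (⇑σ)^[k] ((⇑σ.symm)^[k] t * s) := by
          rw [iter_mul, iter_inv]
        rw [e]
        exact iter_ne_zero σ k hts
      · obtain ⟨c', hc', hck', htop'⟩ := lemA sp im hδ c k htop ((⇑σ.symm)^[k] t * s)
        have hpz : pol sp im c' = 0 := by
          rw [← hc', hcpol]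
          exact hmem
        have hc'0 : c' = 0 := pol_inj sp im (by rw [hpz, pol_zero'])
        have : op ((⇑σ)^[k] ((⇑σ.symm)^[k] t * s)) • c k = 0 := by
          rw [← hck', hc'0]; rfl
        rwa [Set.mem_setOf_eq, show t * (⇑σ)^[k] s = (⇑σ)^[k] ((⇑σ.symm)^[k] t * s) by
          rw [iter_mul, iter_inv]]
    exact hck (hM (c k) hess)
  · -- induced module nonsingular ⇒ M nonsingular
    intro hN m hess
    have hjinj : Function.Injective im.j := by
      intro a b hab
      have h1 : pol sp im (Finsupp.single 0 a) = pol sp im (Finsupp.single 0 b) := by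
        rw [pol_single', pol_single']
        simpa using hab
      have := pol_inj sp im h1
      exact (Finsupp.single_injective 0) this
    have hessN : EssAnn {r : R | op (sp.ι r) • im.j m = 0} := by
      intro t ht
      obtain ⟨s, hts, hmem⟩ := hess t ht
      exact ⟨s, hts, by rw [Set.mem_setOf_eq, ← im.j_smul, hmem, map_zero]⟩
    have := hN (im.j m) hessN
    exact hjinj (this.trans (map_zero im.j).symm)
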